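/- Let $\lambda$ be a dominant weight of a semisimple group $G$ and suppose $w \in W$ is such that the line segment connecting $w\lambda$ and $\lambda$ is an edge of the weight polytope $\mathcal{P}(\lambda) = \mathrm{conv}(W\lambda)$. Then $w\lambda = s_{\tau}\lambda$ for the reflection $s_{\tau}$ associated to some positive root $\tau$ with $\mathrm{Supp}_{\Delta}(\tau) \cap \mathrm{Supp}(\lambda) \neq \varnothing$, and $w\lambda - \lambda$ is a negative multiple of $\tau$. -/

import Mathlib

open Finset

/-!  Combinatorial model of the weight theory of a connected semisimple algebraic
group (characteristic zero).  Weights are written in coordinates with respect to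
the basis `Δ` of simple roots (for a semisimple group every weight is a rational
combination of the simple roots), so the ambient space is `ι → ℚ`, the simple
root `α i` is `Pi.single i 1`, and `A i j = ⟨α i, (α j)ᵛ⟩` is the Cartan matrix.
`Φ` is the set of positive roots (in simple-root coordinates).  -/

variable {ι : Type*} [Fintype ι] [DecidableEq ι]

/-- `⟨x, (α j)ᵛ⟩`, the pairing of `x` (in simple-root coordinates) with the
`j`-th simple coroot. -/
def pairRt (A : ι → ι → ℤ) (x : ι → ℚ) (j : ι) : ℚ := ∑ i, x i * (A i j : ℚ)

/-- `x` is a dominant weight. -/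
def IsDom (A : ι → ι → ℤ) (x : ι → ℚ) : Prop := ∀ j, 0 ≤ pairRt A x j

/-- `x` lies in the weight lattice `Λ` (all coroot pairings are integers). -/
def IsIntegralWt (A : ι → ι → ℤ) (x : ι → ℚ) : Prop := ∀ j, ∃ m : ℤ, pairRt A x j = m

/-- `x ∈ ℕ[Δ]`, i.e. all simple-root coordinates of `x` are natural numbers. -/
def NatCoords (x : ι → ℚ) : Prop := ∀ i, ∃ m : ℕ, x i = m

/-- `x ∈ ℕ[S]`: `x` is a finite sum of elements of `S`. -/
def InNatSpan (S : Set (ι → ℚ)) (x : ι → ℚ) : Prop := x ∈ AddSubmonoid.closure S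

/-- `Φ⁺(λ)`: positive roots whose support over `Δ` meets `Supp(λ)`. -/
def PhiPlusLam (A : ι → ι → ℤ) (Φ : Set (ι → ℚ)) (lam : ι → ℚ) : Set (ι → ℚ) :=
  {β | β ∈ Φ ∧ ∃ i, pairRt A lam i ≠ 0 ∧ β i ≠ 0}

/-- `Φ` is the system of positive roots attached to the Cartan matrix `A` of a
(semisimple) root system. -/
structure IsPosSystem (A : ι → ι → ℤ) (Φ : Set (ι → ℚ)) : Prop where
  cartan_diag : ∀ i, A i i = 2
  cartan_offdiag : ∀ i j, i ≠ j → A i j ≤ 0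
  cartan_symm_zero : ∀ i j, A i j = 0 ↔ A j i = 0
  simple_mem : ∀ i, (Pi.single i 1 : ι → ℚ) ∈ Φ
  coords_nat : ∀ β ∈ Φ, NatCoords β
  reflect_mem : ∀ β ∈ Φ, ∀ j, β ≠ Pi.single j 1 →
    (β - pairRt A β j • (Pi.single j 1 : ι → ℚ)) ∈ Φ
  finite : Φ.Finite

/-- The simple reflection `s j` (as a self-map of the weight space). -/
def reflFun (A : ι → ι → ℤ) (j : ι) : Function.End (ι → ℚ) :=
  fun x => x - pairRt A x j • (Pi.single j 1 : ι → ℚ)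

/-- The Weyl group, realized as the monoid of self-maps generated by the simple
reflections (it is in fact a group, each generator being an involution). -/
def Weyl (A : ι → ι → ℤ) : Submonoid (Function.End (ι → ℚ)) :=
  Submonoid.closure {f | ∃ j, f = reflFun A j}

/-- The Weyl group orbit of `x`. -/
def weylOrbit (A : ι → ι → ℤ) (x : ι → ℚ) : Set (ι → ℚ) :=
  {y | ∃ w ∈ Weyl A, w x = y}

/-- `π ∈ Π(lam)`: `π` is a weight of the irreducible module `V(lam)`; we use the
standard combinatorial description `Π(λ) = W · Π⁺(λ)` with
`Π⁺(λ) = {μ dominant : μ ≤ λ}`. -/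
def IsWeightOf (A : ι → ι → ℤ) (lam π : ι → ℚ) : Prop :=
  ∃ μ, IsDom A μ ∧ NatCoords (lam - μ) ∧ π ∈ weylOrbit A μ

/-!
STATEMENT 5.  Let `lam` be a dominant weight and `w ∈ W` such that the segment
joining `w·lam` and `lam` is an edge (a one-dimensional face, i.e. a proper
extreme segment) of the weight polytope `P(lam) = conv(W·lam)`.  Then
`w·lam = s_τ·lam` for the reflection `s_τ` associated to some positive root `τ`
whose support meets `Supp(lam)`, and `w·lam - lam` is a negative multiple of `τ`.
Here `B` is a Weyl-invariant scalar product, used to write the reflection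
`s_τ x = x - (2 B(x,τ)/B(τ,τ)) τ`.
-/

set_option linter.unusedSectionVars false

-- ### basic pairing lemmas
lemma pairRt_add (A : ι → ι → ℤ) (x y : ι → ℚ) (j : ι) :
    pairRt A (x + y) j = pairRt A x j + pairRt A y j := by
  simp [pairRt, add_mul, Finset.sum_add_distrib]

lemma pairRt_smul (A : ι → ι → ℤ) (c : ℚ) (x : ι → ℚ) (j : ι) :
    pairRt A (c • x) j = c * pairRt A x j := by
  simp [pairRt, Finset.mul_sum, mul_assoc]

lemma pairRt_sub (A : ι → ι → ℤ) (x y : ι → ℚ) (j : ι) :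
    pairRt A (x - y) j = pairRt A x j - pairRt A y j := by
  simp [pairRt, sub_mul, Finset.sum_sub_distrib]

lemma pairRt_single (A : ι → ι → ℤ) (i j : ι) :
    pairRt A (Pi.single i 1) j = A i j := by
  simp [pairRt, Pi.single_apply, ite_mul]

lemma pi_single_sum (x : ι → ℚ) : x = ∑ i, x i • (Pi.single i 1 : ι → ℚ) := by
  conv_lhs => rw [pi_eq_sum_univ x]
  refine Finset.sum_congr rfl fun i _ => ?_
  ext j
  by_cases h : i = j
  · subst h; simp [Pi.single_apply]
  · simp [Pi.single_apply, h, Ne.symm h]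

lemma single_ne_zero' (j : ι) : (Pi.single j 1 : ι → ℚ) ≠ 0 := by
  intro h
  have := congrFun h j
  simp at this

-- ### reflection lemmas
lemma reflFun_apply (A : ι → ι → ℤ) (j : ι) (x : ι → ℚ) :
    reflFun A j x = x - pairRt A x j • (Pi.single j 1 : ι → ℚ) := rfl

lemma reflFun_add (A : ι → ι → ℤ) (j : ι) (x y : ι → ℚ) :
    reflFun A j (x + y) = reflFun A j x + reflFun A j y := by
  simp only [reflFun_apply, pairRt_add, add_smul]; abel

lemma reflFun_smul (A : ι → ι → ℤ) (j : ι) (c : ℚ) (x : ι → ℚ) :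
    reflFun A j (c • x) = c • reflFun A j x := by
  simp only [reflFun_apply, pairRt_smul, mul_smul, smul_sub]

lemma reflFun_sub (A : ι → ι → ℤ) (j : ι) (x y : ι → ℚ) :
    reflFun A j (x - y) = reflFun A j x - reflFun A j y := by
  simp only [reflFun_apply, pairRt_sub, sub_smul]; abel

lemma reflFun_neg (A : ι → ι → ℤ) (j : ι) (x : ι → ℚ) :
    reflFun A j (-x) = - reflFun A j x := by
  have := reflFun_sub A j 0 x
  simpa [reflFun_apply, pairRt_sub, pairRt] using this

lemma pairRt_reflFun (A : ι → ι → ℤ) (j k : ι) (x : ι → ℚ) :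
    pairRt A (reflFun A j x) k = pairRt A x k - pairRt A x j * A j k := by
  simp [reflFun_apply, pairRt_sub, pairRt_smul, pairRt_single]

lemma reflFun_invol (A : ι → ι → ℤ) (hA : ∀ i, A i i = 2) (j : ι) (x : ι → ℚ) :
    reflFun A j (reflFun A j x) = x := by
  rw [reflFun_apply, pairRt_reflFun, hA, reflFun_apply]
  push_cast
  module

-- ### the list action
def act (A : ι → ι → ℤ) (L : List ι) (x : ι → ℚ) : ι → ℚ :=
  L.foldr (fun j y => reflFun A j y) x

@[simp] lemma act_nil (A : ι → ι → ℤ) (x : ι → ℚ) : act A [] x = x := rfl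
@[simp] lemma act_cons (A : ι → ι → ℤ) (j : ι) (L : List ι) (x : ι → ℚ) :
    act A (j :: L) x = reflFun A j (act A L x) := rfl
lemma act_append (A : ι → ι → ℤ) (L M : List ι) (x : ι → ℚ) :
    act A (L ++ M) x = act A L (act A M x) := by
  simp [act, List.foldr_append]

lemma act_add (A : ι → ι → ℤ) (L : List ι) (x y : ι → ℚ) :
    act A L (x + y) = act A L x + act A L y := by
  induction L with
  | nil => rfl
  | cons j L ih => simp [ih, reflFun_add]

lemma act_smul (A : ι → ι → ℤ) (L : List ι) (c : ℚ) (x : ι → ℚ) :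
    act A L (c • x) = c • act A L x := by
  induction L with
  | nil => rfl
  | cons j L ih => simp [ih, reflFun_smul]

lemma act_sub (A : ι → ι → ℤ) (L : List ι) (x y : ι → ℚ) :
    act A L (x - y) = act A L x - act A L y := by
  induction L with
  | nil => rfl
  | cons j L ih => simp [ih, reflFun_sub]

lemma act_reverse (A : ι → ι → ℤ) (hA : ∀ i, A i i = 2) (L : List ι) (x : ι → ℚ) :
    act A L.reverse (act A L x) = x := by
  induction L generalizing x with
  | nil => rfl
  | cons j L ih =>
    simp only [List.reverse_cons, act_append, act_cons, act_nil]
    rw [reflFun_invol A hA, ih]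

-- ### bilinear form lemmas
section Bform
variable {A : ι → ι → ℤ} {Φ : Set (ι → ℚ)} {B : (ι → ℚ) → (ι → ℚ) → ℚ}

lemma B_sub_left (hBlin : ∀ y, IsLinearMap ℚ (fun x => B x y)) (x y z : ι → ℚ) :
    B (x - y) z = B x z - B y z :=
  map_sub (IsLinearMap.mk' _ (hBlin z)) x y

lemma B_smul_left (hBlin : ∀ y, IsLinearMap ℚ (fun x => B x y)) (c : ℚ) (x z : ι → ℚ) :
    B (c • x) z = c * B x z :=
  map_smul (IsLinearMap.mk' _ (hBlin z)) c x

lemma B_zero_left (hBlin : ∀ y, IsLinearMap ℚ (fun x => B x y)) (z : ι → ℚ) :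
    B 0 z = 0 :=
  map_zero (IsLinearMap.mk' _ (hBlin z))

lemma B_sub_right (hBsymm : ∀ x y, B x y = B y x)
    (hBlin : ∀ y, IsLinearMap ℚ (fun x => B x y)) (x y z : ι → ℚ) :
    B z (x - y) = B z x - B z y := by
  rw [hBsymm, B_sub_left hBlin, hBsymm x z, hBsymm y z]

lemma B_smul_right (hBsymm : ∀ x y, B x y = B y x)
    (hBlin : ∀ y, IsLinearMap ℚ (fun x => B x y)) (c : ℚ) (x z : ι → ℚ) :
    B z (c • x) = c * B z x := by
  rw [hBsymm, B_smul_left hBlin, hBsymm x z]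

lemma B_sum_left (hBlin : ∀ y, IsLinearMap ℚ (fun x => B x y))
    {s : Finset ι} (f : ι → (ι → ℚ)) (z : ι → ℚ) :
    B (∑ i ∈ s, f i) z = ∑ i ∈ s, B (f i) z :=
  map_sum (IsLinearMap.mk' _ (hBlin z)) f s

/-- `2 B(x, αⱼ) = ⟨x, αⱼ^∨⟩ B(αⱼ, αⱼ)`. -/
lemma two_B (hBlin : ∀ y, IsLinearMap ℚ (fun x => B x y))
    (hBcartan : ∀ i j, (A i j : ℚ) * B (Pi.single j 1) (Pi.single j 1) =
      2 * B (Pi.single i 1) (Pi.single j 1)) (x : ι → ℚ) (j : ι) :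
    2 * B x (Pi.single j 1) = pairRt A x j * B (Pi.single j 1) (Pi.single j 1) := by
  conv_lhs => rw [pi_single_sum x]
  rw [B_sum_left hBlin, Finset.mul_sum]
  rw [pairRt, Finset.sum_mul]
  refine Finset.sum_congr rfl fun i _ => ?_
  rw [B_smul_left hBlin, mul_assoc (x i), hBcartan i j]
  ring

/-- reflections written via `B`. -/
lemma reflFun_via_B (hBlin : ∀ y, IsLinearMap ℚ (fun x => B x y))
    (hBcartan : ∀ i j, (A i j : ℚ) * B (Pi.single j 1) (Pi.single j 1) =
      2 * B (Pi.single i 1) (Pi.single j 1))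
    (j : ι) (hj : B (Pi.single j 1) (Pi.single j 1) ≠ 0) (x : ι → ℚ) :
    reflFun A j x =
      x - (2 * B x (Pi.single j 1) / B (Pi.single j 1) (Pi.single j 1)) •
        (Pi.single j 1 : ι → ℚ) := by
  rw [reflFun_apply]
  congr 1
  rw [two_B hBlin hBcartan, mul_div_assoc, div_self hj, mul_one]

/-- reflections preserve `B`. -/
lemma B_reflFun (hBsymm : ∀ x y, B x y = B y x)
    (hBlin : ∀ y, IsLinearMap ℚ (fun x => B x y))
    (hBcartan : ∀ i j, (A i j : ℚ) * B (Pi.single j 1) (Pi.single j 1) =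
      2 * B (Pi.single i 1) (Pi.single j 1))
    (j : ι) (x y : ι → ℚ) :
    B (reflFun A j x) (reflFun A j y) = B x y := by
  rw [reflFun_apply, reflFun_apply]
  rw [B_sub_left hBlin, B_sub_right hBsymm hBlin, B_sub_right hBsymm hBlin,
    B_smul_left hBlin, B_smul_right hBsymm hBlin, B_smul_right hBsymm hBlin,
    B_smul_left hBlin]
  have h1 : B x (Pi.single j 1) = pairRt A x j * B (Pi.single j 1) (Pi.single j 1) / 2 := by
    rw [← two_B hBlin hBcartan]; ring
  have h2 : B y (Pi.single j 1) = pairRt A y j * B (Pi.single j 1) (Pi.single j 1) / 2 := by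
    rw [← two_B hBlin hBcartan]; ring
  have h1' : B (Pi.single j 1) x = pairRt A x j * B (Pi.single j 1) (Pi.single j 1) / 2 := by
    rw [hBsymm]; exact h1
  have h2' : B (Pi.single j 1) y = pairRt A y j * B (Pi.single j 1) (Pi.single j 1) / 2 := by
    rw [hBsymm]; exact h2
  simp only [h1, h2, h1', h2']
  ring

lemma B_act (hBsymm : ∀ x y, B x y = B y x)
    (hBlin : ∀ y, IsLinearMap ℚ (fun x => B x y))
    (hBcartan : ∀ i j, (A i j : ℚ) * B (Pi.single j 1) (Pi.single j 1) =
      2 * B (Pi.single i 1) (Pi.single j 1))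
    (L : List ι) (x y : ι → ℚ) :
    B (act A L x) (act A L y) = B x y := by
  induction L with
  | nil => rfl
  | cons j L ih => rw [act_cons, act_cons, B_reflFun hBsymm hBlin hBcartan, ih]

end Bform

-- ### root-system lemmas
section Roots
variable {A : ι → ι → ℤ} {Φ : Set (ι → ℚ)} {B : (ι → ℚ) → (ι → ℚ) → ℚ}

lemma phi_ne_zero (hBlin : ∀ y, IsLinearMap ℚ (fun x => B x y))
    (hBpos : ∀ τ ∈ Φ, 0 < B τ τ) {β : ι → ℚ} (hβ : β ∈ Φ) : β ≠ 0 := by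
  intro h
  have := hBpos β hβ
  rw [h, B_zero_left hBlin] at this
  exact lt_irrefl 0 this

lemma phi_not_neg (hΦ : IsPosSystem A Φ)
    (hBlin : ∀ y, IsLinearMap ℚ (fun x => B x y))
    (hBpos : ∀ τ ∈ Φ, 0 < B τ τ) {β : ι → ℚ} (hβ : β ∈ Φ) : -β ∉ Φ := by
  intro hnβ
  have hzero : β = 0 := by
    funext i
    obtain ⟨m, hm⟩ := hΦ.coords_nat β hβ i
    obtain ⟨m', hm'⟩ := hΦ.coords_nat (-β) hnβ i
    have hneg : (-β) i = -(β i) := rfl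
    rw [hm] at hneg
    rw [hm'] at hneg
    have hm'0 : (m' : ℚ) = -(m : ℚ) := hneg
    have : (m : ℚ) = 0 := by
      have h1 : (0:ℚ) ≤ (m:ℚ) := Nat.cast_nonneg m
      have h2 : (0:ℚ) ≤ (m':ℚ) := Nat.cast_nonneg m'
      linarith
    rw [hm, this, Pi.zero_apply]
  exact phi_ne_zero hBlin hBpos hβ hzero

lemma refl_root (hΦ : IsPosSystem A Φ) (j : ι) {β : ι → ℚ} (hβ : β ∈ Φ) :
    reflFun A j β ∈ Φ ∨ -(reflFun A j β) ∈ Φ := by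
  by_cases h : β = Pi.single j 1
  · right
    subst h
    have : reflFun A j (Pi.single j 1) = -(Pi.single j 1 : ι → ℚ) := by
      rw [reflFun_apply, pairRt_single, hΦ.cartan_diag]
      push_cast
      module
    rw [this, neg_neg]
    exact hΦ.simple_mem j
  · left
    simpa [reflFun_apply] using hΦ.reflect_mem β hβ j h

lemma act_root (hΦ : IsPosSystem A Φ) (L : List ι) {β : ι → ℚ} (hβ : β ∈ Φ) :
    act A L β ∈ Φ ∨ -(act A L β) ∈ Φ := by
  induction L with
  | nil => exact Or.inl hβ
  | cons j L ih =>
    rcases ih with h | h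
    · exact refl_root hΦ j h
    · have hneg : act A (j :: L) β = -(reflFun A j (-(act A L β))) := by
        rw [act_cons, reflFun_neg, neg_neg]
      rcases refl_root hΦ j h with h' | h'
      · right; rw [hneg, neg_neg]; exact h'
      · left; rw [hneg]; exact h'

end Roots

-- ### deletion condition and dominance
section Deletion
variable {A : ι → ι → ℤ} {Φ : Set (ι → ℚ)} {B : (ι → ℚ) → (ι → ℚ) → ℚ}

lemma act_conj (hΦ : IsPosSystem A Φ) (hBsymm : ∀ x y, B x y = B y x)
    (hBlin : ∀ y, IsLinearMap ℚ (fun x => B x y))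
    (hBcartan : ∀ i j, (A i j : ℚ) * B (Pi.single j 1) (Pi.single j 1) =
      2 * B (Pi.single i 1) (Pi.single j 1))
    (hBpos : ∀ τ ∈ Φ, 0 < B τ τ)
    {L : List ι} {j k : ι} (h : act A L (Pi.single j 1) = Pi.single k 1) (x : ι → ℚ) :
    reflFun A k (act A L x) = act A L (reflFun A j x) := by
  have hBjj := hBpos _ (hΦ.simple_mem j)
  have hkk : B (Pi.single k 1) (Pi.single k 1) = B (Pi.single j 1) (Pi.single j 1) := by
    rw [← h, B_act hBsymm hBlin hBcartan]
  have hBk : B (Pi.single k 1) (Pi.single k 1) ≠ 0 := by rw [hkk]; exact ne_of_gt hBjj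
  have hBj : B (Pi.single j 1) (Pi.single j 1) ≠ 0 := ne_of_gt hBjj
  have hx : B (act A L x) (Pi.single k 1) = B x (Pi.single j 1) := by
    rw [← h, B_act hBsymm hBlin hBcartan]
  rw [reflFun_via_B hBlin hBcartan k hBk, reflFun_via_B hBlin hBcartan j hBj,
    act_sub, act_smul, h, hkk, hx]

lemma del (hΦ : IsPosSystem A Φ) (hBsymm : ∀ x y, B x y = B y x)
    (hBlin : ∀ y, IsLinearMap ℚ (fun x => B x y))
    (hBcartan : ∀ i j, (A i j : ℚ) * B (Pi.single j 1) (Pi.single j 1) =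
      2 * B (Pi.single i 1) (Pi.single j 1))
    (hBpos : ∀ τ ∈ Φ, 0 < B τ τ)
    (L : List ι) (j : ι) (h : act A L (Pi.single j 1) ∉ Φ) :
    ∃ M : List ι, M.length + 1 = L.length ∧ ∀ x, act A (L ++ [j]) x = act A M x := by
  -- first find the decomposition
  have hdec : ∀ L' : List ι, act A L' (Pi.single j 1) ∉ Φ →
      ∃ L₁ k L₂, L' = L₁ ++ k :: L₂ ∧ act A L₂ (Pi.single j 1) = Pi.single k 1 := by
    intro L'
    induction L' with
    | nil => intro h; exact absurd (hΦ.simple_mem j) h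
    | cons a L ih =>
      intro h
      by_cases hL : act A L (Pi.single j 1) ∈ Φ
      · have heq : act A L (Pi.single j 1) = Pi.single a 1 := by
          by_contra hne
          exact h (by simpa [act_cons, reflFun_apply] using hΦ.reflect_mem _ hL a hne)
        exact ⟨[], a, L, rfl, heq⟩
      · obtain ⟨L₁, k, L₂, rfl, hk⟩ := ih hL
        exact ⟨a :: L₁, k, L₂, rfl, hk⟩
  obtain ⟨L₁, k, L₂, rfl, hk⟩ := hdec L h
  refine ⟨L₁ ++ L₂, by simp; omega, fun x => ?_⟩
  have e1 : act A ((L₁ ++ k :: L₂) ++ [j]) x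
      = act A L₁ (reflFun A k (act A L₂ (reflFun A j x))) := by
    rw [act_append, act_append]
    rfl
  rw [e1, act_conj hΦ hBsymm hBlin hBcartan hBpos hk,
    reflFun_invol A hΦ.cartan_diag, ← act_append]

lemma dom_sub (hΦ : IsPosSystem A Φ) (hBsymm : ∀ x y, B x y = B y x)
    (hBlin : ∀ y, IsLinearMap ℚ (fun x => B x y))
    (hBcartan : ∀ i j, (A i j : ℚ) * B (Pi.single j 1) (Pi.single j 1) =
      2 * B (Pi.single i 1) (Pi.single j 1))
    (hBpos : ∀ τ ∈ Φ, 0 < B τ τ) :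
    ∀ (n : ℕ) (L : List ι) (ν : ι → ℚ), IsDom A ν → L.length ≤ n →
      ∀ i, 0 ≤ ν i - act A L ν i := by
  intro n
  induction n with
  | zero =>
    intro L ν hν hL i
    rw [List.length_eq_zero_iff.mp (Nat.le_zero.mp hL)]
    simp
  | succ n ih =>
    intro L ν hν hL i
    rcases List.eq_nil_or_concat L with rfl | ⟨L₀, j, rfl⟩
    · simp
    · rw [List.concat_eq_append] at *
      have hlen : L₀.length ≤ n := by
        simp only [List.length_append, List.length_cons, List.length_nil] at hL
        omega
      by_cases hroot : act A L₀ (Pi.single j 1) ∈ Φ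
      · have key : act A (L₀ ++ [j]) ν
            = act A L₀ ν - pairRt A ν j • act A L₀ (Pi.single j 1) := by
          rw [act_append]
          have e : act A [j] ν = ν - pairRt A ν j • (Pi.single j 1 : ι → ℚ) := rfl
          rw [e, act_sub, act_smul]
        obtain ⟨m, hm⟩ := hΦ.coords_nat _ hroot i
        have h1 := ih L₀ ν hν hlen i
        have h2 := hν j
        rw [key]
        have e2 : (act A L₀ ν - pairRt A ν j • act A L₀ (Pi.single j 1)) i
            = act A L₀ ν i - pairRt A ν j * act A L₀ (Pi.single j 1) i := rfl
        rw [e2, hm]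
        have h3 : (0:ℚ) ≤ (m:ℚ) := Nat.cast_nonneg m
        nlinarith
      · obtain ⟨M, hMlen, hM⟩ := del hΦ hBsymm hBlin hBcartan hBpos L₀ j hroot
        rw [hM ν]
        exact ih M ν hν (by omega) i

lemma dom_unique (hΦ : IsPosSystem A Φ) (hBsymm : ∀ x y, B x y = B y x)
    (hBlin : ∀ y, IsLinearMap ℚ (fun x => B x y))
    (hBcartan : ∀ i j, (A i j : ℚ) * B (Pi.single j 1) (Pi.single j 1) =
      2 * B (Pi.single i 1) (Pi.single j 1))
    (hBpos : ∀ τ ∈ Φ, 0 < B τ τ)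
    (ν : ι → ℚ) (hν : IsDom A ν) (L : List ι) (hμdom : IsDom A (act A L ν)) :
    act A L ν = ν := by
  have h1 := dom_sub hΦ hBsymm hBlin hBcartan hBpos L.length L ν hν le_rfl
  have h2 := dom_sub hΦ hBsymm hBlin hBcartan hBpos L.reverse.length L.reverse
    (act A L ν) hμdom le_rfl
  funext i
  have h2' := h2 i
  rw [act_reverse A hΦ.cartan_diag] at h2'
  have h1' := h1 i
  linarith

lemma pair_int {lam : ι → ℚ} (hint : ∀ j, ∃ m : ℤ, pairRt A lam j = m) :
    ∀ (L : List ι) (k : ι), ∃ m : ℤ, pairRt A (act A L lam) k = m := by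
  intro L
  induction L with
  | nil => exact hint
  | cons j L ih =>
    intro k
    obtain ⟨m, hm⟩ := ih k
    obtain ⟨m', hm'⟩ := ih j
    exact ⟨m - m' * A j k, by rw [act_cons, pairRt_reflFun, hm, hm']; push_cast; ring⟩

lemma coords_int {lam : ι → ℚ} (hint : ∀ j, ∃ m : ℤ, pairRt A lam j = m) :
    ∀ (L : List ι) (i : ι), ∃ m : ℤ, lam i - act A L lam i = m := by
  intro L
  induction L with
  | nil => exact fun i => ⟨0, by simp⟩
  | cons j L ih =>
    intro i
    obtain ⟨m, hm⟩ := ih i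
    obtain ⟨p, hp⟩ := pair_int hint L j
    refine ⟨m + p * (if i = j then 1 else 0), ?_⟩
    have e : act A (j :: L) lam i
        = act A L lam i - pairRt A (act A L lam) j * (if i = j then 1 else 0) := by
      rw [act_cons, reflFun_apply]
      have : (Pi.single j 1 : ι → ℚ) i = if i = j then 1 else 0 := Pi.single_apply j 1 i
      rw [Pi.sub_apply, Pi.smul_apply, this, smul_eq_mul]
    rw [e, hp]
    push_cast
    rw [← hm]
    ring

end Deletion

-- ### Weyl group / orbit bridging

section Orbit
variable {A : ι → ι → ℤ}

lemma mapProd_eq (L : List ι) (x : ι → ℚ) :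
    ((L.map (reflFun A)).prod) x = act A L x := by
  induction L with
  | nil => rfl
  | cons j L ih =>
    simp only [List.map_cons, List.prod_cons, act_cons]
    rw [← ih]
    rfl

lemma orbit_iff {lam y : ι → ℚ} : y ∈ weylOrbit A lam ↔ ∃ L : List ι, y = act A L lam := by
  constructor
  · rintro ⟨w, hw, rfl⟩
    obtain ⟨l, hl, rfl⟩ := Submonoid.exists_list_of_mem_closure hw
    clear hw
    induction l with
    | nil => exact ⟨[], rfl⟩
    | cons f l ih =>
      obtain ⟨L, hL⟩ := ih (fun g hg => hl g (List.mem_cons_of_mem f hg))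
      obtain ⟨j, rfl⟩ := hl f List.mem_cons_self
      exact ⟨j :: L, by rw [List.prod_cons, act_cons, ← hL]; rfl⟩
  · rintro ⟨L, rfl⟩
    refine ⟨(L.map (reflFun A)).prod, ?_, mapProd_eq L lam⟩
    refine Submonoid.list_prod_mem _ fun f hf => ?_
    obtain ⟨j, -, rfl⟩ := List.mem_map.mp hf
    exact Submonoid.subset_closure ⟨j, rfl⟩

lemma act_mem_orbit (L : List ι) (lam : ι → ℚ) : act A L lam ∈ weylOrbit A lam :=
  orbit_iff.mpr ⟨L, rfl⟩

lemma refl_image_orbit (hA : ∀ i, A i i = 2) (lam : ι → ℚ) (j : ι) :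
    reflFun A j '' weylOrbit A lam = weylOrbit A lam := by
  apply Set.Subset.antisymm
  · rintro y ⟨z, hz, rfl⟩
    obtain ⟨L, rfl⟩ := orbit_iff.mp hz
    exact act_mem_orbit (j :: L) lam
  · rintro y hy
    obtain ⟨L, rfl⟩ := orbit_iff.mp hy
    exact ⟨act A (j :: L) lam, act_mem_orbit _ _, by
      rw [act_cons, reflFun_invol A hA]⟩

lemma isLinearMap_reflFun (j : ι) : IsLinearMap ℚ (reflFun A j) :=
  ⟨reflFun_add A j, reflFun_smul A j⟩

/-- the reflection as a linear map -/
def reflLin (A : ι → ι → ℤ) (j : ι) : (ι → ℚ) →ₗ[ℚ] (ι → ℚ) :=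
  IsLinearMap.mk' (reflFun A j) (isLinearMap_reflFun j)

lemma refl_image_convexHull (S : Set (ι → ℚ)) (j : ι) :
    reflFun A j '' convexHull ℚ S = convexHull ℚ (reflFun A j '' S) :=
  (isLinearMap_reflFun j).image_convexHull S

lemma extreme_reflect (hA : ∀ i, A i i = 2) {C E : Set (ι → ℚ)} (j : ι)
    (hC : reflFun A j '' C = C) (h : IsExtreme ℚ C E) :
    IsExtreme ℚ C (reflFun A j '' E) := by
  constructor
  · rw [← hC]; exact Set.image_mono h.1
  · rintro x hx y hy z ⟨z₀, hz₀, rfl⟩ hseg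
    have hx' : reflFun A j x ∈ C := hC ▸ Set.mem_image_of_mem _ hx
    have hy' : reflFun A j y ∈ C := hC ▸ Set.mem_image_of_mem _ hy
    have hzseg : z₀ ∈ openSegment ℚ (reflFun A j x) (reflFun A j y) := by
      have h2 := Set.mem_image_of_mem (reflFun A j) hseg
      rw [show (reflFun A j '' openSegment ℚ x y)
          = openSegment ℚ (reflFun A j x) (reflFun A j y) by
        exact image_openSegment ℚ (reflLin A j).toAffineMap x y] at h2
      rwa [reflFun_invol A hA] at h2
    have h1 := h.2 hx' hy' hz₀ hzseg
    exact ⟨_, h1, reflFun_invol A hA j x⟩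

end Orbit

-- ### the main induction
section Main
variable {A : ι → ι → ℤ} {Φ : Set (ι → ℚ)} {B : (ι → ℚ) → (ι → ℚ) → ℚ}

lemma B_add_left (hBlin : ∀ y, IsLinearMap ℚ (fun x => B x y)) (x y z : ι → ℚ) :
    B (x + y) z = B x z + B y z :=
  map_add (IsLinearMap.mk' _ (hBlin z)) x y

lemma B_add_right (hBsymm : ∀ x y, B x y = B y x)
    (hBlin : ∀ y, IsLinearMap ℚ (fun x => B x y)) (x y z : ι → ℚ) :
    B z (x + y) = B z x + B z y := by
  rw [hBsymm, B_add_left hBlin, hBsymm x z, hBsymm y z]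

lemma norm_coeff (hBsymm : ∀ x y, B x y = B y x)
    (hBlin : ∀ y, IsLinearMap ℚ (fun x => B x y))
    {τ : ι → ℚ} (hτ : B τ τ ≠ 0) {c : ℚ} (hc : c ≠ 0) {μ lam : ι → ℚ}
    (hμ : μ - lam = c • τ) (hnorm : B μ μ = B lam lam) :
    c = -(2 * B lam τ) / B τ τ := by
  have hμ' : μ = lam + c • τ := by
    rw [← hμ]; abel
  rw [hμ'] at hnorm
  rw [B_add_left hBlin, B_add_right hBsymm hBlin, B_add_right hBsymm hBlin,
    B_smul_left hBlin, B_smul_right hBsymm hBlin, B_smul_right hBsymm hBlin,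
    B_smul_left hBlin] at hnorm
  have hsy : B τ lam = B lam τ := hBsymm τ lam
  rw [hsy] at hnorm
  have h2 : c * (2 * B lam τ + c * B τ τ) = 0 := by linarith
  have h3 : 2 * B lam τ + c * B τ τ = 0 := by
    rcases mul_eq_zero.mp h2 with h | h
    · exact absurd h hc
    · exact h
  field_simp
  linarith

lemma conclude_form (hμτ : ∀ x:ℕ, True) : True := trivial

lemma main_aux (hΦ : IsPosSystem A Φ)
    (hBsymm : ∀ x y, B x y = B y x)
    (hBlin : ∀ y, IsLinearMap ℚ (fun x => B x y))
    (hBpos : ∀ τ ∈ Φ, 0 < B τ τ)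
    (hBcartan : ∀ i j, (A i j : ℚ) * B (Pi.single j 1) (Pi.single j 1) =
      2 * B (Pi.single i 1) (Pi.single j 1))
    (lam : ι → ℚ) (hdom : IsDom A lam) (hint : ∀ j, ∃ m : ℤ, pairRt A lam j = m) :
    ∀ (N : ℕ) (L : List ι), act A L lam ≠ lam →
      (∑ i, (lam i - act A L lam i)) ≤ (N : ℚ) →
      IsExtreme ℚ (convexHull ℚ (weylOrbit A lam)) (segment ℚ (act A L lam) lam) →
      ∃ τ ∈ Φ, (∃ i, pairRt A lam i ≠ 0 ∧ τ i ≠ 0) ∧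
        act A L lam = lam - (2 * B lam τ / B τ τ) • τ ∧
        ∃ c : ℚ, c < 0 ∧ act A L lam - lam = c • τ := by
  intro N
  induction N with
  | zero =>
    intro L hne hht _
    exfalso
    apply hne
    funext i
    have h1 := dom_sub hΦ hBsymm hBlin hBcartan hBpos L.length L lam hdom le_rfl
    have hsum0 : ∑ i, (lam i - act A L lam i) = 0 :=
      le_antisymm (by exact_mod_cast hht) (Finset.sum_nonneg fun i _ => h1 i)
    have h0 := (Finset.sum_eq_zero_iff_of_nonneg (fun i _ => h1 i)).mp hsum0 i
      (Finset.mem_univ i)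
    linarith
  | succ N ih =>
    intro L hne hht hedge
    set C := convexHull ℚ (weylOrbit A lam) with hC
    set μ := act A L lam with hμdef
    -- μ is not dominant, get a pivot j
    have hnotdom : ¬ IsDom A μ := fun hd =>
      hne (dom_unique hΦ hBsymm hBlin hBcartan hBpos lam hdom L hd)
    simp only [IsDom, not_forall, not_le] at hnotdom
    obtain ⟨j, hj⟩ := hnotdom
    set c : ℚ := -pairRt A μ j with hcdef
    have hc : 0 < c := by simp [hcdef]; linarith
    have hμ' : act A (j :: L) lam = μ + c • (Pi.single j 1 : ι → ℚ) := by
      rw [act_cons, ← hμdef, reflFun_apply, hcdef]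
      module
    have hμ'orb : act A (j :: L) lam ∈ weylOrbit A lam := act_mem_orbit _ _
    have hμorb : μ ∈ weylOrbit A lam := act_mem_orbit _ _
    have hμ'C : act A (j :: L) lam ∈ C := subset_convexHull ℚ _ hμ'orb
    have hμC : μ ∈ C := subset_convexHull ℚ _ hμorb
    have hlamC : lam ∈ C := subset_convexHull ℚ _ (act_mem_orbit [] lam)
    have hBjj : (0:ℚ) < B (Pi.single j 1) (Pi.single j 1) := hBpos _ (hΦ.simple_mem j)
    have hnorm : B μ μ = B lam lam := by
      rw [hμdef]; exact B_act hBsymm hBlin hBcartan L lam lam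
    rcases (hdom j).lt_or_eq with hq | hq
    · -- q := pairRt A lam j > 0 : the pivot reflection must send μ into the segment
      set q : ℚ := pairRt A lam j with hqdef
      have hμ'seg : act A (j :: L) lam ∈ segment ℚ μ lam := by
        by_contra hnotin
        set z : ι → ℚ := (1/2 : ℚ) • μ + (1/2 : ℚ) • lam with hz
        have hzE : z ∈ segment ℚ μ lam :=
          ⟨1/2, 1/2, by norm_num, by norm_num, by norm_num, rfl⟩
        set r : ℚ := min (q / (2*c)) (1/2) with hr
        have hr0 : 0 < r := lt_min (by positivity) (by norm_num)
        have hr2 : r ≤ 1/2 := min_le_right _ _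
        have hrq : 2 * r * c ≤ q := by
          have : r ≤ q / (2*c) := min_le_left _ _
          rw [le_div_iff₀ (by positivity : (0:ℚ) < 2*c)] at this
          linarith
        have h1r : (0:ℚ) < 1 + r := by linarith
        set t : ℚ := 2*r*c/(1+r) with ht
        have ht0 : 0 ≤ t := by positivity
        have htq : t ≤ q := by
          rw [ht, div_le_iff₀ h1r]
          nlinarith
        -- the point lam - t • α_j belongs to C
        have hsjlam : lam - q • (Pi.single j 1 : ι → ℚ) ∈ C := by
          have : act A [j] lam = lam - q • (Pi.single j 1 : ι → ℚ) := rfl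
          rw [← this]
          exact subset_convexHull ℚ _ (act_mem_orbit [j] lam)
        have hPc : lam - t • (Pi.single j 1 : ι → ℚ) ∈ C := by
          have hconv : Convex ℚ C := convex_convexHull ℚ _
          have hcomb := hconv hlamC hsjlam (a := 1 - t/q) (b := t/q)
            (by rw [sub_nonneg, div_le_one hq]; exact htq) (by positivity) (by ring)
          have : (1 - t/q) • lam + (t/q) • (lam - q • (Pi.single j 1 : ι → ℚ))
              = lam - t • (Pi.single j 1 : ι → ℚ) := by
            rw [smul_sub, smul_smul, div_mul_cancel₀ _ (ne_of_gt hq)]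
            module
          rwa [this] at hcomb
        -- the point y
        set y : ι → ℚ := ((1+r)/2) • (lam - t • (Pi.single j 1 : ι → ℚ)) + ((1-r)/2) • μ
          with hy
        have hyC : y ∈ C := by
          have hconv : Convex ℚ C := convex_convexHull ℚ _
          exact hconv hPc hμC (by positivity) (by linarith) (by ring)
        have h1r' : (1 + r) ≠ 0 := ne_of_gt h1r
        have hzopen : z ∈ openSegment ℚ (act A (j :: L) lam) y := by
          refine ⟨r/(1+r), 1/(1+r), by positivity, by positivity, ?_, ?_⟩
          · field_simp [h1r']
            ring
          · rw [hμ', hy, hz]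
            match_scalars <;> (try (field_simp [h1r']; try ring))
            linear_combination (2 * r * pairRt A μ j) * (inv_mul_cancel₀ h1r')
        have := hedge.2 hμ'C hyC hzE hzopen
        exact hnotin this
      -- now μ' lies on the segment: the edge is in direction α_j
      obtain ⟨a, b, ha, hb, hab, habeq⟩ := hμ'seg
      rw [hμ'] at habeq
      have hbv : b • (lam - μ) = c • (Pi.single j 1 : ι → ℚ) := by
        have ha' : a = 1 - b := by linarith
        rw [ha'] at habeq
        linear_combination (norm := module) habeq
      have hbne : b ≠ 0 := by
        intro h0
        rw [h0, zero_smul] at hbv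
        have := congrFun hbv j
        simp [Pi.single_apply] at this
        linarith
      set d : ℚ := c / b with hd
      have hd0 : 0 < d := by
        have hb0 : 0 < b := lt_of_le_of_ne hb (Ne.symm hbne)
        positivity
      have hlam_sub : lam - μ = d • (Pi.single j 1 : ι → ℚ) := by
        have h := congrArg (fun v => (b⁻¹ : ℚ) • v) hbv
        simp only [smul_smul] at h
        rw [inv_mul_cancel₀ hbne, one_smul] at h
        rw [h, hd]
        congr 1
        field_simp
      have hlamμ : μ - lam = (-d) • (Pi.single j 1 : ι → ℚ) := by
        have e : μ - lam = -(lam - μ) := by abel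
        rw [e, hlam_sub, neg_smul]
      have hdne : (-d : ℚ) ≠ 0 := by
        intro h0
        rw [neg_eq_zero] at h0
        exact (ne_of_gt hd0) h0
      have hdq := norm_coeff hBsymm hBlin (ne_of_gt hBjj) hdne hlamμ hnorm
      have h2B : 2 * B lam (Pi.single j 1)
          = q * B (Pi.single j 1) (Pi.single j 1) := by
        rw [two_B hBlin hBcartan, hqdef]
      have hdq' : d = q := by
        rw [h2B] at hdq
        rw [neg_div] at hdq
        rw [mul_div_assoc, div_self (ne_of_gt hBjj), mul_one] at hdq
        linarith
      have hqform : 2 * B lam (Pi.single j 1) / B (Pi.single j 1) (Pi.single j 1) = q := by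
        rw [h2B, mul_div_assoc, div_self (ne_of_gt hBjj), mul_one]
      refine ⟨Pi.single j 1, hΦ.simple_mem j, ⟨j, ?_, ?_⟩, ?_, ⟨-q, by linarith, ?_⟩⟩
      · rw [← hqdef]; exact ne_of_gt hq
      · simp [Pi.single_apply]
      · rw [hqform]
        have h5 := hlam_sub
        rw [hdq'] at h5
        linear_combination (norm := module) -h5
      · rw [hlamμ, hdq']
    · -- second case : pairRt A lam j = 0, reflect the edge and use the IH
      have hq0 : pairRt A lam j = 0 := hq.symm
      have hlamfix : reflFun A j lam = lam := by
        rw [reflFun_apply, hq0, zero_smul, sub_zero]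
      set μ'' := act A (j :: L) lam with hμ''def
      have hrefμ : reflFun A j μ'' = μ := by
        rw [hμ''def, act_cons, reflFun_invol A hΦ.cartan_diag, hμdef]
      have hne'' : μ'' ≠ lam := by
        intro h
        apply hne
        rw [h, hlamfix] at hrefμ
        exact hrefμ.symm
      have hCimg : reflFun A j '' C = C := by
        rw [hC, refl_image_convexHull, refl_image_orbit hΦ.cartan_diag]
      have hsegimg : reflFun A j '' segment ℚ μ lam = segment ℚ μ'' lam := by
        rw [show reflFun A j '' segment ℚ μ lam
            = segment ℚ (reflFun A j μ) (reflFun A j lam) by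
          exact image_segment ℚ (reflLin A j).toAffineMap μ lam, hlamfix,
          hμdef, ← act_cons, ← hμ''def]
      have hedge'' : IsExtreme ℚ C (segment ℚ μ'' lam) := by
        rw [← hsegimg]
        exact extreme_reflect hΦ.cartan_diag j hCimg hedge
      obtain ⟨m, hm⟩ := pair_int hint L j
      have hc1 : (1:ℚ) ≤ c := by
        rw [hcdef, ← hμdef] at *
        rw [hμdef] at hm
        have hm0 : m < 0 := by
          have : (m:ℚ) < 0 := by rw [← hm]; exact hj
          exact_mod_cast this
        have : (m:ℚ) ≤ -1 := by exact_mod_cast Int.le_sub_one_of_lt hm0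
        rw [hcdef, hm]
        linarith
      have hsum'' : ∑ i, (lam i - μ'' i) = (∑ i, (lam i - μ i)) - c := by
        rw [hμ']
        have e : ∀ i, lam i - (μ + c • (Pi.single j 1 : ι → ℚ)) i
            = (lam i - μ i) - c * (if i = j then 1 else 0) := by
          intro i
          simp [Pi.single_apply]
          ring
        rw [Finset.sum_congr rfl fun i _ => e i, Finset.sum_sub_distrib]
        congr 1
        simp [mul_ite, mul_one, mul_zero]
      have hht'' : ∑ i, (lam i - μ'' i) ≤ (N:ℚ) := by
        rw [hsum'']
        push_cast at hht ⊢
        linarith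
      obtain ⟨τ', hτ'Φ, ⟨i', hi'lam, hi'τ⟩, hform', c', hc'neg, hc'eq⟩ :=
        ih (j :: L) hne'' hht'' hedge''
      have hnorm'' : B μ'' μ'' = B lam lam := by
        rw [hμ''def]; exact B_act hBsymm hBlin hBcartan (j :: L) lam lam
      have hτ'ne : τ' ≠ Pi.single j 1 := by
        intro h
        rw [h] at hc'eq
        rw [← hμ''def] at hc'eq
        have hcoef := norm_coeff hBsymm hBlin (ne_of_gt hBjj) (ne_of_lt hc'neg)
          hc'eq hnorm''
        have h2B0 : 2 * B lam (Pi.single j 1) = 0 := by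
          rw [two_B hBlin hBcartan, hq0, zero_mul]
        rw [h2B0] at hcoef
        simp at hcoef
        linarith
      set τ := reflFun A j τ' with hτdef
      have hτΦ : τ ∈ Φ := by
        have := hΦ.reflect_mem τ' hτ'Φ j hτ'ne
        simpa [hτdef, reflFun_apply] using this
      have hμτ : μ - lam = c' • τ := by
        conv_lhs => rw [← hrefμ, ← hlamfix]
        rw [← reflFun_sub]
        rw [← hμ''def] at hc'eq
        rw [hc'eq, reflFun_smul, ← hτdef]
      have hτ0 : B τ τ ≠ 0 := ne_of_gt (hBpos τ hτΦ)
      have hcoef := norm_coeff hBsymm hBlin hτ0 (ne_of_lt hc'neg) hμτ hnorm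
      refine ⟨τ, hτΦ, ⟨i', hi'lam, ?_⟩, ?_, ⟨c', hc'neg, hμτ⟩⟩
      · have hij : i' ≠ j := by
          intro h
          rw [h, hq0] at hi'lam
          exact hi'lam rfl
        rw [hτdef, reflFun_apply]
        have hz : (Pi.single j 1 : ι → ℚ) i' = 0 := by simp [Pi.single_apply, hij]
        rw [Pi.sub_apply, Pi.smul_apply, hz, smul_eq_mul, mul_zero, sub_zero]
        exact hi'τ
      · have hμeq : μ = lam + c' • τ := by rw [← hμτ]; abel
        rw [hμeq, hcoef, neg_div, neg_smul, ← sub_eq_add_neg]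


theorem edge_of_weight_polytope
    (A : ι → ι → ℤ) (Φ : Set (ι → ℚ)) (hΦ : IsPosSystem A Φ)
    (B : (ι → ℚ) → (ι → ℚ) → ℚ)
    (hBsymm : ∀ x y, B x y = B y x)
    (hBlin : ∀ y, IsLinearMap ℚ (fun x => B x y))
    (hBpos : ∀ τ ∈ Φ, 0 < B τ τ)
    -- compatibility of `B` with the Cartan matrix: `A i j = 2B(αᵢ,αⱼ)/B(αⱼ,αⱼ)`
    (hBcartan : ∀ i j, (A i j : ℚ) * B (Pi.single j 1) (Pi.single j 1) =
      2 * B (Pi.single i 1) (Pi.single j 1))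
    (lam : ι → ℚ) (hdom : IsDom A lam) (hint : IsIntegralWt A lam)
    (w : Function.End (ι → ℚ)) (hw : w ∈ Weyl A)
    (hne : w lam ≠ lam)
    (hedge : IsExtreme ℚ (convexHull ℚ (weylOrbit A lam)) (segment ℚ (w lam) lam)) :
    ∃ τ ∈ PhiPlusLam A Φ lam,
      w lam = lam - (2 * B lam τ / B τ τ) • τ ∧
      ∃ c : ℚ, c < 0 ∧ w lam - lam = c • τ := by
  have horb : w lam ∈ weylOrbit A lam := ⟨w, hw, rfl⟩
  obtain ⟨L, hL⟩ := orbit_iff.mp horb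
  obtain ⟨N, hN⟩ := exists_nat_ge (∑ i, (lam i - act A L lam i))
  rw [hL] at hne hedge ⊢
  obtain ⟨τ, hτΦ, hsupp, hform, c, hcneg, heq⟩ :=
    main_aux hΦ hBsymm hBlin hBpos hBcartan lam hdom hint N L hne hN hedge
  exact ⟨τ, ⟨hτΦ, hsupp⟩, hform, c, hcneg, heq⟩
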